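/- arXiv:1812.02289 — 2 statements merged into one kernel-verified Lean document; each statement's English description precedes it below -/
import Mathlib

section
/- For the t-Batch assignment, every user appears at most once per batch: for any two distinct interaction indices j and k with u(j) = u(k), we have batch(j) ≠ batch(k). -/
/-- The t-Batch assignment on a sequence of interactions with users `u j` and
items `v j`, defined by strong recursion:
`tBatch u v j = 1 + max{ tBatch u v k : k < j and (u k = u j or v k = v j) }`,
where the maximum over the empty set is `0`. -/
def tBatch {U I : Type*} [DecidableEq U] [DecidableEq I]
    (u : ℕ → U) (v : ℕ → I) (j : ℕ) : ℕ :=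
  1 + ((Finset.range j).attach.filter
      (fun k => u k.1 = u j ∨ v k.1 = v j)).sup (fun k => tBatch u v k.1)
termination_by j
decreasing_by
  exact Finset.mem_range.mp k.2

/-- For the t-Batch assignment, every user appears at most once per batch:
for any two distinct interaction indices `j` and `k` (among the `n`
interactions) with `u j = u k`, we have `batch j ≠ batch k`. -/
theorem tBatch_user_at_most_once_per_batch
    {U I : Type*} [DecidableEq U] [DecidableEq I]
    (n : ℕ) (u : ℕ → U) (v : ℕ → I)
    (j k : ℕ) (hj : j < n) (hk : k < n) (hjk : j ≠ k) (huser : u j = u k) :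
    tBatch u v j ≠ tBatch u v k := by
  have key : ∀ (a b : ℕ), a < b → u a = u b → tBatch u v a < tBatch u v b := by
    intro a b hab hu
    rw [show tBatch u v b = 1 + ((Finset.range b).attach.filter
        (fun k => u k.1 = u b ∨ v k.1 = v b)).sup (fun k => tBatch u v k.1) from
      by rw [tBatch]]
    have hmem : (⟨a, Finset.mem_range.mpr hab⟩ : {x // x ∈ Finset.range b}) ∈
        (Finset.range b).attach.filter (fun k => u k.1 = u b ∨ v k.1 = v b) := by
      simp [hu]
    have h2 : tBatch u v a ≤ _ := Finset.le_sup (f := fun k => tBatch u v k.1) hmem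
    omega
  rcases lt_or_gt_of_ne hjk with h | h
  · exact Nat.ne_of_lt (key j k h huser)
  · exact Nat.ne_of_gt (key k j h huser.symm)
end

section
/- For the t-Batch assignment, every item appears at most once per batch: for any two distinct interaction indices j and k with v(j) = v(k), we have batch(j) ≠ batch(k). -/
lemma tBatch_lt {U I : Type*} [DecidableEq U] [DecidableEq I]
    (u : ℕ → U) (v : ℕ → I) {j k : ℕ} (hjk : j < k)
    (h : u j = u k ∨ v j = v k) : tBatch u v j < tBatch u v k := by
  have hmem : (⟨j, Finset.mem_range.mpr hjk⟩ : {x // x ∈ Finset.range k}) ∈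
      (Finset.range k).attach.filter (fun x => u x.1 = u k ∨ v x.1 = v k) := by
    simp [h]
  have h1 := Finset.le_sup (f := fun x => tBatch u v x.1) hmem
  simp only at h1
  conv_rhs => rw [tBatch]
  omega

/-- For the t-Batch assignment, every item appears at most once per batch:
for any two distinct interaction indices `j` and `k` (among the `n`
interactions) with `v j = v k`, we have `batch j ≠ batch k`. -/
theorem tBatch_item_at_most_once_per_batch
    {U I : Type*} [DecidableEq U] [DecidableEq I]
    (n : ℕ) (u : ℕ → U) (v : ℕ → I)
    (j k : ℕ) (hj : j < n) (hk : k < n) (hjk : j ≠ k) (hitem : v j = v k) :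
    tBatch u v j ≠ tBatch u v k := by
  rcases lt_or_gt_of_ne hjk with h | h
  · exact (tBatch_lt u v h (Or.inr hitem)).ne
  · exact (tBatch_lt u v h (Or.inr hitem.symm)).ne'
end
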